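/- arXiv:0807.4263 — 7 statements merged into one kernel-verified Lean document; each statement's English description precedes it below -/
import Mathlib

section
/- For indices ℓ > k and arbitrary integers p, q, one has s_ℓ^p ∘ s_k^q = s_k^q ∘ s_ℓ^{p·(-1)^{q·A^k_ℓ}}; that is, s_ℓ^p ∘ s_k^q = s_k^q ∘ s_ℓ^{-p} if q·A^k_ℓ is odd, and s_ℓ^p ∘ s_k^q = s_k^q ∘ s_ℓ^{p} otherwise. -/
noncomputable def bottMotion {n : ℕ} (A : Matrix (Fin n) (Fin n) (ZMod 2)) (i : Fin n) :
    Equiv.Perm (Fin n → ℝ) where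
  toFun u := fun j => (-1 : ℝ) ^ (A i j).val * u j + if j = i then 2⁻¹ else 0
  invFun v := fun j => (-1 : ℝ) ^ (A i j).val * (v j - if j = i then 2⁻¹ else 0)
  left_inv u := by
    funext j
    have h : ((-1 : ℝ) ^ (A i j).val) * ((-1 : ℝ) ^ (A i j).val) = 1 := by
      rw [← pow_add]
      exact Even.neg_one_pow ⟨(A i j).val, rfl⟩
    dsimp only
    rw [add_sub_cancel_right, ← mul_assoc, h, one_mul]
  right_inv v := by
    funext j
    have h : ((-1 : ℝ) ^ (A i j).val) * ((-1 : ℝ) ^ (A i j).val) = 1 := by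
      rw [← pow_add]
      exact Even.neg_one_pow ⟨(A i j).val, rfl⟩
    dsimp only
    rw [← mul_assoc, h, one_mul, sub_add_cancel]

noncomputable def bottGroup {n : ℕ} (A : Matrix (Fin n) (Fin n) (ZMod 2)) :
    Subgroup (Equiv.Perm (Fin n → ℝ)) :=
  Subgroup.closure (Set.range (bottMotion A))



lemma neg_one_zpow_two' : ((-1 : ℤˣ)) ^ (2:ℤ) = 1 := by
  rw [show (2:ℤ) = ((2:ℕ):ℤ) from rfl, zpow_natCast]
  exact Int.units_sq (-1)

lemma neg_one_zpow_odd {q : ℤ} (h : Odd q) : ((-1 : ℤˣ) ^ q) = -1 := by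
  obtain ⟨t, rfl⟩ := h
  rw [zpow_add, zpow_mul, neg_one_zpow_two', one_zpow, zpow_one, one_mul]

-- group lemma
lemma flip_lemma {G : Type*} [Group G] {a b : G} (h : b * a * b⁻¹ = a⁻¹) :
    ∀ q m : ℤ, a ^ m * b ^ q = b ^ q * a ^ (m * (((-1 : ℤˣ) ^ q : ℤˣ) : ℤ)) := by
  have key : ∀ t : ℤ, a ^ t * b = b * a ^ (-t) := by
    intro t
    have : b * a ^ (-t) * b⁻¹ = a ^ t := by
      rw [← conj_zpow (i := -t) (a := b) (b := a)] at *
      rw [h, zpow_neg, inv_zpow, inv_inv]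
    calc a ^ t * b = (b * a ^ (-t) * b⁻¹) * b := by rw [this]
    _ = b * a ^ (-t) := by group
  intro q
  induction q using Int.induction_on with
  | zero => intro m; simp
  | succ i ih =>
      intro m
      have e1 : b ^ ((i : ℤ) + 1) = b ^ (i : ℤ) * b := by rw [zpow_add, zpow_one]
      have eexp : (m * (((-1:ℤˣ) ^ ((i:ℤ)+1) : ℤˣ):ℤ)) = -(m * (((-1:ℤˣ) ^ (i:ℤ) : ℤˣ):ℤ)) := by
        rw [zpow_add_one]
        push_cast
        ring
      rw [eexp, e1, ← mul_assoc, ih m, mul_assoc, key, ← mul_assoc]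
  | pred i ih =>
      intro m
      have e1 : b ^ (-(i : ℤ) - 1) = b ^ (-(i : ℤ)) * b⁻¹ := by
        rw [← zpow_neg_one, ← zpow_add]; ring_nf
      have key' : ∀ t : ℤ, a ^ t * b⁻¹ = b⁻¹ * a ^ (-t) := by
        intro t
        have := key (-t)
        rw [neg_neg] at this
        calc a ^ t * b⁻¹ = b⁻¹ * (a ^ (-t) * b) * b⁻¹ := by rw [this]; group
        _ = b⁻¹ * a ^ (-t) := by group
      have eexp : (m * (((-1:ℤˣ) ^ (-(i:ℤ)-1) : ℤˣ):ℤ)) = -(m * (((-1:ℤˣ) ^ (-(i:ℤ)) : ℤˣ):ℤ)) := by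
        rw [zpow_sub_one]
        simp
      rw [eexp, e1, ← mul_assoc, ih m, mul_assoc, key', ← mul_assoc]


lemma bott_commute {n : ℕ} (A : Matrix (Fin n) (Fin n) (ZMod 2))
    (hA : ∀ i j : Fin n, j ≤ i → A i j = 0) (k ℓ : Fin n) (hkℓ : k < ℓ)
    (h0 : (A k ℓ).val = 0) :
    bottMotion A ℓ * bottMotion A k = bottMotion A k * bottMotion A ℓ := by
  have hlk : (A ℓ k).val = 0 := by rw [hA ℓ k hkℓ.le]; rfl
  apply Equiv.ext
  intro u
  funext j
  simp only [bottMotion, Equiv.Perm.mul_apply, Equiv.coe_fn_mk]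
  by_cases hk : j = k
  · subst hk
    have : j ≠ ℓ := hkℓ.ne
    simp [this, hlk, h0]
  · by_cases hl : j = ℓ
    · subst hl
      simp [hk, h0, hlk]
    · simp [hk, hl]
      ring

lemma bott_anticommute {n : ℕ} (A : Matrix (Fin n) (Fin n) (ZMod 2))
    (hA : ∀ i j : Fin n, j ≤ i → A i j = 0) (k ℓ : Fin n) (hkℓ : k < ℓ)
    (h1 : (A k ℓ).val = 1) :
    bottMotion A k * bottMotion A ℓ * (bottMotion A k)⁻¹ = (bottMotion A ℓ)⁻¹ := by
  have hlk : (A ℓ k).val = 0 := by rw [hA ℓ k hkℓ.le]; rfl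
  have hll : (A ℓ ℓ).val = 0 := by rw [hA ℓ ℓ le_rfl]; rfl
  apply Equiv.ext
  intro u
  funext j
  rw [show ((bottMotion A ℓ)⁻¹ : Equiv.Perm (Fin n → ℝ)) = (bottMotion A ℓ).symm from rfl,
      show ((bottMotion A k)⁻¹ : Equiv.Perm (Fin n → ℝ)) = (bottMotion A k).symm from rfl]
  simp only [bottMotion, Equiv.Perm.mul_apply, Equiv.coe_fn_mk, Equiv.coe_fn_symm_mk]
  have hsq : ∀ m : ℕ, ((-1:ℝ))^(m*2) = 1 := fun m => Even.neg_one_pow ⟨m, by ring⟩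
  by_cases hk : j = k
  · subst hk
    have hne : j ≠ ℓ := hkℓ.ne
    simp [hne, hlk]
    ring_nf
    rw [hsq]
    ring
  · by_cases hl : j = ℓ
    · subst hl
      simp [hk, h1, hll]
      ring
    · simp [hk, hl]
      ring_nf
      rw [hsq]
      ring

/-- For k < ℓ and integers p, q,
s_ℓ^p ∘ s_k^q = s_k^q ∘ s_ℓ^{p·(-1)^{q·A^k_ℓ}}; i.e. the exponent flips sign exactly
when q·A^k_ℓ is odd. -/
theorem bott_generator_power_relation {n : ℕ} (A : Matrix (Fin n) (Fin n) (ZMod 2))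
    (hA : ∀ i j : Fin n, j ≤ i → A i j = 0) (k ℓ : Fin n) (hkℓ : k < ℓ) (p q : ℤ) :
    bottMotion A ℓ ^ p * bottMotion A k ^ q =
      bottMotion A k ^ q *
        bottMotion A ℓ ^ (p * ((((-1 : ℤˣ) ^ (q * ((A k ℓ).val : ℤ))) : ℤˣ) : ℤ)) ∧
    (Odd (q * ((A k ℓ).val : ℤ)) →
      bottMotion A ℓ ^ p * bottMotion A k ^ q = bottMotion A k ^ q * bottMotion A ℓ ^ (-p)) ∧
    (¬ Odd (q * ((A k ℓ).val : ℤ)) →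
      bottMotion A ℓ ^ p * bottMotion A k ^ q = bottMotion A k ^ q * bottMotion A ℓ ^ p) := by
  have hv := ZMod.val_lt (A k ℓ)
  have hcases : (A k ℓ).val = 0 ∨ (A k ℓ).val = 1 := by omega
  rcases hcases with h0 | h1
  · have hc : Commute (bottMotion A ℓ) (bottMotion A k) := bott_commute A hA k ℓ hkℓ h0
    have hmain : bottMotion A ℓ ^ p * bottMotion A k ^ q
        = bottMotion A k ^ q * bottMotion A ℓ ^ p := (hc.zpow_zpow p q).eq
    rw [h0]
    simp only [Nat.cast_zero, mul_zero, zpow_zero, Units.val_one, mul_one]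
    refine ⟨hmain, fun hodd => absurd hodd (by norm_num), fun _ => hmain⟩
  · have hrel := bott_anticommute A hA k ℓ hkℓ h1
    have hflip := flip_lemma hrel q p
    rw [h1]
    simp only [Nat.cast_one, mul_one]
    refine ⟨hflip, ?_, ?_⟩
    · intro hq
      rw [hflip, neg_one_zpow_odd hq]
      norm_num
    · intro hq
      rw [hflip, Even.neg_one_zpow (Int.not_odd_iff_even.mp hq)]
      norm_num
end

section
/- For arbitrary integers p₁,…,pₙ and q₁,…,qₙ, the product (s₁^{p₁}s₂^{p₂}⋯sₙ^{pₙ})(s₁^{q₁}s₂^{q₂}⋯sₙ^{qₙ}) equals s₁^{r₁}s₂^{r₂}⋯sₙ^{rₙ} where r_j = (-1)^{Σ_{k=1}^{j-1} q_k A^k_j} p_j + q_j for each j, and the product (s₁^{p₁}s₂^{p₂}⋯sₙ^{pₙ})(sₙ^{-qₙ}⋯s₂^{-q₂}s₁^{-q₁}) equals s₁^{r'₁}s₂^{r'₂}⋯sₙ^{r'ₙ} where r'_j = (-1)^{Σ_{k=1}^{j-1} q_k A^k_j}(p_j − q_j) for each j. (Here A^k_j ∈ {0,1} ⊂ ℤ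 is used as an integer exponent.) -/
lemma neg_one_zpow_cast (e : ℤ) :
    ((((-1 : ℤˣ) ^ e : ℤˣ) : ℤ) : ℝ) = (-1 : ℝ) ^ e := by
  rcases Int.even_or_odd e with h | h
  · rw [h.neg_one_zpow, h.neg_one_zpow]; norm_num
  · have h2 : (-1:ℤˣ)^e = -1 := by
      obtain ⟨k, rfl⟩ := h
      rw [zpow_add, zpow_one, zpow_mul]
      norm_num [zpow_two]
    rw [h2, h.neg_one_zpow]; norm_num

lemma neg_one_zpow_add (a b : ℤ) : (-1:ℝ)^(a+b) = (-1:ℝ)^a * (-1:ℝ)^b :=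
  zpow_add₀ (by norm_num) a b

lemma neg_one_zpow_congr {a b : ℤ} (h : Even (a - b)) : (-1:ℝ)^a = (-1:ℝ)^b := by
  have ha : a = b + (a - b) := by ring
  rw [ha, neg_one_zpow_add, h.neg_one_zpow, mul_one]

lemma bottMotion_apply {n : ℕ} (A : Matrix (Fin n) (Fin n) (ZMod 2)) (i : Fin n)
    (u : Fin n → ℝ) (j : Fin n) :
    bottMotion A i u j = (-1 : ℝ) ^ (A i j).val * u j + if j = i then 2⁻¹ else 0 := rfl

lemma natPow_eq_zpow (k : ℕ) : (-1:ℝ)^k = (-1:ℝ)^((k:ℤ)) := (zpow_natCast _ _).symm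

lemma bottMotion_pow_apply {n : ℕ} (A : Matrix (Fin n) (Fin n) (ZMod 2)) {i : Fin n}
    (hii : A i i = 0) (m : ℕ) (u : Fin n → ℝ) :
    (bottMotion A i ^ m) u = fun j =>
      (-1 : ℝ) ^ ((m : ℤ) * ((A i j).val : ℤ)) * u j + if j = i then (m : ℝ) / 2 else 0 := by
  induction m with
  | zero => simp
  | succ m ih =>
    rw [pow_succ']
    funext j
    have h1 : (bottMotion A i * bottMotion A i ^ m) u
        = bottMotion A i ((bottMotion A i ^ m) u) := rfl
    rw [h1, bottMotion_apply, ih]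
    rcases eq_or_ne j i with rfl | hne
    · simp [hii]; push_cast; ring
    · simp only [hne, if_false, add_zero, mul_zero]
      rw [← mul_assoc, natPow_eq_zpow, ← neg_one_zpow_add]
      congr 2
      push_cast
      ring

lemma bottMotion_zpow_apply {n : ℕ} (A : Matrix (Fin n) (Fin n) (ZMod 2)) {i : Fin n}
    (hii : A i i = 0) (m : ℤ) (u : Fin n → ℝ) :
    (bottMotion A i ^ m) u = fun j =>
      (-1 : ℝ) ^ (m * ((A i j).val : ℤ)) * u j + if j = i then (m : ℝ) / 2 else 0 := by
  rcases m with m | m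
  · rw [Int.ofNat_eq_coe, zpow_natCast, bottMotion_pow_apply A hii]
    push_cast; rfl
  · rw [zpow_negSucc]
    have key : ∀ v : Fin n → ℝ, (bottMotion A i ^ (m+1))
        (fun j => (-1 : ℝ) ^ ((Int.negSucc m) * ((A i j).val : ℤ)) * v j
          + if j = i then ((Int.negSucc m : ℤ) : ℝ) / 2 else 0) = v := by
      intro v
      rw [bottMotion_pow_apply A hii]
      funext j
      rcases eq_or_ne j i with rfl | hne
      · simp [hii, Int.negSucc_eq]; push_cast; ring
      · simp only [hne, if_false, add_zero, mul_zero]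
        rw [← mul_assoc, ← neg_one_zpow_add]
        have he : Even ((↑(m+1) * ((A i j).val : ℤ)) + (Int.negSucc m) * ((A i j).val : ℤ)) := by
          rw [Int.negSucc_eq]; push_cast; exact ⟨0, by ring⟩
        rw [he.neg_one_zpow, one_mul]
    funext j
    have h2 : ((bottMotion A i ^ (m+1))⁻¹ : Equiv.Perm (Fin n → ℝ)) u
        = fun j => (-1 : ℝ) ^ ((Int.negSucc m) * ((A i j).val : ℤ)) * u j
          + if j = i then ((Int.negSucc m : ℤ) : ℝ) / 2 else 0 := by
      apply (Equiv.symm_apply_eq _).mpr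
      exact (key u).symm
    rw [h2]

lemma bott_list_prod_apply {n : ℕ} (A : Matrix (Fin n) (Fin n) (ZMod 2))
    (hA : ∀ i j : Fin n, j ≤ i → A i j = 0) (p : Fin n → ℤ)
    (l : List (Fin n)) (hl : l.Pairwise (· < ·)) (u : Fin n → ℝ) :
    (l.map fun j => bottMotion A j ^ p j).prod u = fun j =>
      (-1 : ℝ) ^ (∑ k ∈ l.toFinset.filter (fun k => k < j), p k * ((A k j).val : ℤ)) *
        (u j + if j ∈ l then (p j : ℝ) / 2 else 0) := by
  induction l with
  | nil => simp
  | cons i l ih =>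
    rw [List.pairwise_cons] at hl
    obtain ⟨hi, hl⟩ := hl
    have hinotmem : i ∉ l := fun h => lt_irrefl i (hi i h)
    rw [List.map_cons, List.prod_cons]
    have h1 : (bottMotion A i ^ p i * (l.map fun j => bottMotion A j ^ p j).prod) u
        = (bottMotion A i ^ p i) ((l.map fun j => bottMotion A j ^ p j).prod u) := rfl
    rw [h1, ih hl, bottMotion_zpow_apply A (hA i i le_rfl)]
    funext j
    have hfin : (i :: l).toFinset.filter (fun k => k < j)
        = if i < j then insert i (l.toFinset.filter (fun k => k < j))
          else l.toFinset.filter (fun k => k < j) := by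
      rw [List.toFinset_cons, Finset.filter_insert]
    rcases eq_or_ne j i with rfl | hne
    · have hv : (A j j).val = 0 := by rw [hA j j le_rfl]; rfl
      have hfl : l.toFinset.filter (fun k => k < j) = ∅ := by
        apply Finset.filter_eq_empty_iff.mpr
        intro k hk
        exact not_lt.mpr (le_of_lt (hi k (List.mem_toFinset.mp hk)))
      rw [hfin, if_neg (lt_irrefl j), hfl]
      simp [hinotmem, hv]
    · have hmem : (if j ∈ i :: l then ((p j : ℝ)) / 2 else 0)
          = (if j ∈ l then ((p j : ℝ)) / 2 else 0) := by
        simp [List.mem_cons, hne]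
      rw [hfin, hmem]
      simp only [hne, if_false, add_zero, mul_zero]
      rcases lt_or_ge i j with hij | hij
      · rw [if_pos hij, Finset.sum_insert (by simp [hinotmem]), neg_one_zpow_add]
        ring
      · rw [if_neg (not_lt.mpr hij)]
        have hv : (A i j).val = 0 := by rw [hA i j hij]; rfl
        rw [hv]
        push_cast
        rw [mul_zero, zpow_zero, one_mul]

lemma bott_mul_formula {n : ℕ} (A : Matrix (Fin n) (Fin n) (ZMod 2))
    (hA : ∀ i j : Fin n, j ≤ i → A i j = 0) (p q : Fin n → ℤ) :
    (List.ofFn fun j => bottMotion A j ^ p j).prod *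
        (List.ofFn fun j => bottMotion A j ^ q j).prod =
      (List.ofFn fun j => bottMotion A j ^
        (((((-1 : ℤˣ) ^ (∑ k ∈ Finset.filter (fun k => k < j) Finset.univ,
              q k * ((A k j).val : ℤ))) : ℤˣ) : ℤ) * p j + q j)).prod := by
  set r : Fin n → ℤ := fun j =>
    ((((-1 : ℤˣ) ^ (∑ k ∈ Finset.filter (fun k => k < j) Finset.univ,
        q k * ((A k j).val : ℤ))) : ℤˣ) : ℤ) * p j + q j with hrdef
  apply Equiv.ext
  intro u
  have hpw := List.pairwise_lt_finRange n
  have hmul : ((List.ofFn fun j => bottMotion A j ^ p j).prod *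
      (List.ofFn fun j => bottMotion A j ^ q j).prod) u
      = (List.ofFn fun j => bottMotion A j ^ p j).prod
        ((List.ofFn fun j => bottMotion A j ^ q j).prod u) := rfl
  rw [hmul, List.ofFn_eq_map, List.ofFn_eq_map, List.ofFn_eq_map,
    bott_list_prod_apply A hA q _ hpw u, bott_list_prod_apply A hA p _ hpw _,
    bott_list_prod_apply A hA r _ hpw u]
  funext j
  simp only [List.mem_finRange, if_true, List.toFinset_finRange]
  set F := Finset.filter (fun k => k < j) (Finset.univ : Finset (Fin n)) with hF
  set Ep := ∑ k ∈ F, p k * ((A k j).val : ℤ) with hEp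
  set Eq' := ∑ k ∈ F, q k * ((A k j).val : ℤ) with hEq
  set Er := ∑ k ∈ F, r k * ((A k j).val : ℤ) with hEr
  have heven : Even (Er - (Ep + Eq')) := by
    rw [hEr, hEp, hEq, ← Finset.sum_add_distrib, ← Finset.sum_sub_distrib]
    apply Finset.even_sum
    intro k hk
    rcases Int.units_eq_one_or ((-1 : ℤˣ) ^ (∑ k' ∈ Finset.filter (fun k' => k' < k) Finset.univ,
        q k' * ((A k' k).val : ℤ))) with h | h
    · exact ⟨0, by rw [hrdef]; simp only; rw [h]; push_cast; ring⟩
    · exact ⟨-(p k * ((A k j).val : ℤ)), by rw [hrdef]; simp only; rw [h]; push_cast; ring⟩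
  have hsign : (-1 : ℝ) ^ Er = (-1 : ℝ) ^ Ep * (-1 : ℝ) ^ Eq' := by
    rw [← neg_one_zpow_add]
    exact neg_one_zpow_congr heven
  have hb : (-1 : ℝ) ^ Eq' * (-1 : ℝ) ^ Eq' = 1 := by
    rw [← neg_one_zpow_add]
    exact Even.neg_one_zpow ⟨Eq', rfl⟩
  have hrj : ((r j : ℤ) : ℝ) = (-1 : ℝ) ^ Eq' * (p j : ℝ) + (q j : ℝ) := by
    rw [hrdef]
    push_cast [neg_one_zpow_cast]
    rw [hEq, hF]
  rw [hsign, hrj]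
  set a := (-1 : ℝ) ^ Ep
  set b := (-1 : ℝ) ^ Eq'
  linear_combination (-(a * (p j : ℝ) / 2)) * hb

/-- Formula for the exponents when multiplying two products
s₁^{p₁}⋯sₙ^{pₙ} · s₁^{q₁}⋯sₙ^{qₙ} and s₁^{p₁}⋯sₙ^{pₙ} · (s₁^{q₁}⋯sₙ^{qₙ})⁻¹
(the latter being sₙ^{-qₙ}⋯s₁^{-q₁}): the j-th exponents are
(-1)^{Σ_{k<j} q_k A^k_j} p_j + q_j and (-1)^{Σ_{k<j} q_k A^k_j} (p_j - q_j). -/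
theorem bott_exponent_formula {n : ℕ} (A : Matrix (Fin n) (Fin n) (ZMod 2))
    (hA : ∀ i j : Fin n, j ≤ i → A i j = 0) (p q : Fin n → ℤ) :
    ((List.ofFn fun j => bottMotion A j ^ p j).prod *
        (List.ofFn fun j => bottMotion A j ^ q j).prod =
      (List.ofFn fun j => bottMotion A j ^
        (((((-1 : ℤˣ) ^ (∑ k ∈ Finset.filter (fun k => k < j) Finset.univ,
              q k * ((A k j).val : ℤ))) : ℤˣ) : ℤ) * p j + q j)).prod) ∧
    ((List.ofFn fun j => bottMotion A j ^ p j).prod *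
        ((List.ofFn fun j => bottMotion A j ^ q j).prod)⁻¹ =
      (List.ofFn fun j => bottMotion A j ^
        (((((-1 : ℤˣ) ^ (∑ k ∈ Finset.filter (fun k => k < j) Finset.univ,
              q k * ((A k j).val : ℤ))) : ℤˣ) : ℤ) * (p j - q j))).prod) := by
  refine ⟨bott_mul_formula A hA p q, ?_⟩
  set r' : Fin n → ℤ := fun j =>
    ((((-1 : ℤˣ) ^ (∑ k ∈ Finset.filter (fun k => k < j) Finset.univ,
        q k * ((A k j).val : ℤ))) : ℤˣ) : ℤ) * (p j - q j) with hr'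
  have h := bott_mul_formula A hA r' q
  have hfg : (fun j => bottMotion A j ^
      (((((-1 : ℤˣ) ^ (∑ k ∈ Finset.filter (fun k => k < j) Finset.univ,
        q k * ((A k j).val : ℤ))) : ℤˣ) : ℤ) * r' j + q j))
      = fun j => bottMotion A j ^ p j := by
    funext j
    congr 1
    rw [hr']
    simp only
    rw [← mul_assoc, ← Units.val_mul, Int.units_mul_self, Units.val_one, one_mul]
    ring
  rw [hfg] at h
  rw [← h, mul_inv_cancel_right]
end

section
/- The action of Γ(A) on ℝⁿ is free: every element of Γ(A) other than the identity has no fixed point in ℝⁿ. -/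
private lemma neg_one_pow_zmod_add (a b : ZMod 2) :
    ((-1 : ℝ)) ^ (a + b).val = (-1 : ℝ) ^ a.val * (-1 : ℝ) ^ b.val := by
  have ha := ZMod.val_lt a
  have hb := ZMod.val_lt b
  rw [ZMod.val_add]
  interval_cases a.val <;> interval_cases b.val <;> norm_num

private lemma bott_form {n : ℕ} (A : Matrix (Fin n) (Fin n) (ZMod 2))
    {g : Equiv.Perm (Fin n → ℝ)} (hg : g ∈ bottGroup A) :
    ∃ (m : Fin n → ZMod 2) (c : Fin n → ℤ),
      (∀ j, ((c j : ZMod 2)) = m j) ∧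
      ∀ u j, g u j = (-1 : ℝ) ^ (∑ i, m i * A i j).val * u j + (c j : ℝ) / 2 := by
  induction hg using Subgroup.closure_induction with
  | mem x hx =>
    obtain ⟨i, rfl⟩ := hx
    refine ⟨(Pi.single i 1 : Fin n → ZMod 2), fun j => if j = i then 1 else 0, ?_, ?_⟩
    · intro j
      by_cases h : j = i <;> simp [h, Pi.single_apply]
    · intro u j
      have hsum : (∑ k, (Pi.single i 1 : Fin n → ZMod 2) k * A k j) = A i j := by
        simp [Pi.single_apply, Finset.sum_ite_eq]
      rw [hsum]
      show (-1 : ℝ) ^ (A i j).val * u j + (if j = i then 2⁻¹ else 0) = _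
      by_cases h : j = i <;> simp [h]
  | one =>
    refine ⟨0, 0, by simp, fun u j => ?_⟩
    simp
  | mul x y hx hy ihx ihy =>
    obtain ⟨mx, cx, hpx, hfx⟩ := ihx
    obtain ⟨my, cy, hpy, hfy⟩ := ihy
    refine ⟨mx + my, fun j => (-1 : ℤ) ^ (∑ i, mx i * A i j).val * cy j + cx j, ?_, ?_⟩
    · intro j
      push_cast
      rw [hpx j, hpy j]
      have : ((-1 : ZMod 2)) ^ (∑ i, mx i * A i j).val = 1 := by
        rw [show ((-1 : ZMod 2)) = 1 by decide, one_pow]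
      rw [this, one_mul, add_comm]
      rfl
    · intro u j
      have : (x * y) u j = x (y u) j := rfl
      rw [this, hfx (y u) j, hfy u j]
      have hsum : (∑ i, (mx + my) i * A i j) = (∑ i, mx i * A i j) + ∑ i, my i * A i j := by
        rw [← Finset.sum_add_distrib]
        exact Finset.sum_congr rfl fun i _ => by rw [Pi.add_apply, add_mul]
      rw [hsum, neg_one_pow_zmod_add]
      push_cast
      ring
  | inv x hx ihx =>
    obtain ⟨mx, cx, hpx, hfx⟩ := ihx
    refine ⟨mx, fun j => -((-1 : ℤ) ^ (∑ i, mx i * A i j).val * cx j), ?_, ?_⟩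
    · intro j
      push_cast
      rw [hpx j]
      have : ((-1 : ZMod 2)) ^ (∑ i, mx i * A i j).val = 1 := by
        rw [show ((-1 : ZMod 2)) = 1 by decide, one_pow]
      rw [this, one_mul, CharTwo.neg_eq]
    · intro v j
      have key : x (x⁻¹ v) = v := x.apply_symm_apply v
      have := hfx (x⁻¹ v) j
      rw [key] at this
      have hsq : ((-1 : ℝ) ^ (∑ i, mx i * A i j).val) * ((-1 : ℝ) ^ (∑ i, mx i * A i j).val) = 1 := by
        rw [← pow_add]
        exact Even.neg_one_pow ⟨(∑ i, mx i * A i j).val, rfl⟩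
      have hinv : (-1 : ℝ) ^ (∑ i, mx i * A i j).val * (v j - (cx j : ℝ) / 2) =
          (x⁻¹ : Equiv.Perm (Fin n → ℝ)) v j := by
        rw [this, add_sub_cancel_right, ← mul_assoc, hsq, one_mul]
      rw [← hinv]
      push_cast
      ring

/-- the action of Γ(A) on ℝⁿ is free: every non-identity element of
Γ(A) has no fixed point. -/
theorem bott_action_free {n : ℕ} (A : Matrix (Fin n) (Fin n) (ZMod 2))
    (hA : ∀ i j : Fin n, j ≤ i → A i j = 0) :
    ∀ g ∈ bottGroup A, g ≠ 1 → ∀ x : Fin n → ℝ, g x ≠ x := by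
  intro g hg hne x hfix
  obtain ⟨m, c, hp, hf⟩ := bott_form A hg
  by_cases hm : m = 0
  · -- all signs are +1, so g is translation by c/2; fixed point forces c = 0, so g = 1
    subst hm
    have hc : ∀ j, c j = 0 := by
      intro j
      have := hf x j
      rw [hfix] at this
      simp only [Pi.zero_apply, zero_mul, Finset.sum_const_zero, ZMod.val_zero, pow_zero,
        one_mul] at this
      have : (c j : ℝ) = 0 := by linarith
      exact_mod_cast this
    apply hne
    ext u j
    have := hf u j
    simp only [Pi.zero_apply, zero_mul, Finset.sum_const_zero, ZMod.val_zero, pow_zero,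
      one_mul, hc j, Int.cast_zero, zero_div, add_zero] at this
    simpa using this
  · -- take the minimal j with m j ≠ 0
    obtain ⟨j0, hj0⟩ : ∃ j, m j ≠ 0 := by
      by_contra h
      push_neg at h
      exact hm (funext fun j => h j)
    obtain ⟨j, hj, hjmin⟩ := Finset.exists_min_image
      (Finset.univ.filter fun j => m j ≠ 0) id ⟨j0, by simp [hj0]⟩
    simp only [Finset.mem_filter, Finset.mem_univ, true_and] at hj
    have hsum : (∑ i, m i * A i j) = 0 := by
      apply Finset.sum_eq_zero
      intro i _
      by_cases hi : m i = 0
      · rw [hi, zero_mul]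
      · have hji : j ≤ i := hjmin i (by simp [hi])
        rw [hA i j hji, mul_zero]
    have := hf x j
    rw [hfix, hsum] at this
    simp only [ZMod.val_zero, pow_zero, one_mul] at this
    have hcj : (c j : ℝ) = 0 := by linarith
    have : (c j : ZMod 2) = 0 := by
      have : c j = 0 := by exact_mod_cast hcj
      rw [this]; rfl
    rw [hp j] at this
    exact hj this
end

section
/- Let N be the normal subgroup of Γ(A) consisting of the translations by vectors in ℤⁿ (the subgroup generated by s₁²,…,sₙ²). Then the quotient group Γ(A)/N is an elementary abelian 2-group of rank n, isomorphic to (ℤ/2)ⁿ via the map sending the class of s_j to the j-th standard generator; i.e., there is a short exact sequence 0 → ℤⁿ → Γ(A) → (ℤ/2)ⁿ → 1. -/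
def intTranslations (n : ℕ) : Subgroup (Equiv.Perm (Fin n → ℝ)) where
  carrier := {g | ∃ v : Fin n → ℤ, ∀ x, g x = x + fun k => (v k : ℝ)}
  one_mem' := ⟨0, fun x => by funext k; simp⟩
  mul_mem' := by
    rintro f g ⟨v, hv⟩ ⟨w, hw⟩
    refine ⟨w + v, fun x => ?_⟩
    have h : (f * g) x = f (g x) := rfl
    rw [h, hw, hv]
    funext k
    simp
    ring
  inv_mem' := by
    rintro g ⟨v, hv⟩
    refine ⟨-v, fun x => ?_⟩
    have h2 : g (x + fun k => ((-v) k : ℝ)) = x := by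
      rw [hv]; funext k; simp
    have h3 : g⁻¹ (g (x + fun k => ((-v) k : ℝ))) = x + fun k => ((-v) k : ℝ) :=
      g.symm_apply_apply _
    rw [h2] at h3
    exact h3

lemma neg_one_pow_mod_two' (m : ℕ) : ((-1 : ℝ)) ^ (m % 2) = (-1 : ℝ) ^ m := by
  rcases Nat.even_or_odd m with h | h
  · rw [Nat.even_iff.mp h, h.neg_one_pow, pow_zero]
  · rw [Nat.odd_iff.mp h, h.neg_one_pow, pow_one]

lemma bott_formula_mul {n : ℕ} {g h : Equiv.Perm (Fin n → ℝ)}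
    {ε δ : Fin n → ZMod 2} {c d : Fin n → ℤ}
    (hg : ∀ u k, g u k = (-1 : ℝ) ^ (ε k).val * u k + c k / 2)
    (hh : ∀ u k, h u k = (-1 : ℝ) ^ (δ k).val * u k + d k / 2) :
    ∀ u k, (g * h) u k = (-1 : ℝ) ^ ((ε k + δ k).val) * u k +
      ((-1 : ℤ) ^ (ε k).val * d k + c k : ℤ) / 2 := by
  intro u k
  have : (g * h) u k = g (h u) k := rfl
  rw [this, hg, hh]
  have hpow : ((-1 : ℝ)) ^ ((ε k + δ k).val) = (-1 : ℝ) ^ (ε k).val * (-1 : ℝ) ^ (δ k).val := by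
    rw [ZMod.val_add, neg_one_pow_mod_two', pow_add]
  rw [hpow]
  push_cast
  ring

/-- structural form of any element of `bottGroup A` -/
def BottStruct {n : ℕ} (A : Matrix (Fin n) (Fin n) (ZMod 2))
    (g : Equiv.Perm (Fin n → ℝ)) : Prop :=
  ∃ (ε : Fin n → ZMod 2) (c : Fin n → ℤ),
    (∀ u k, g u k = (-1 : ℝ) ^ (ε k).val * u k + c k / 2) ∧
    (∀ k, ε k = ∑ i, (c i : ZMod 2) * A i k)

lemma bott_struct {n : ℕ} (A : Matrix (Fin n) (Fin n) (ZMod 2)) :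
    ∀ g ∈ bottGroup A, BottStruct A g := by
  intro g hg
  refine Subgroup.closure_induction (p := fun g _ => BottStruct A g) ?_ ?_ ?_ ?_ hg
  · rintro x ⟨i, rfl⟩
    refine ⟨fun k => A i k, fun k => if k = i then 1 else 0, fun u k => ?_, fun k => ?_⟩
    · show (-1 : ℝ) ^ (A i k).val * u k + (if k = i then 2⁻¹ else 0) = _
      by_cases hki : k = i <;> simp [hki] <;> norm_num
    · rw [Finset.sum_congr rfl (fun j _ => by
        show ((if j = i then (1:ℤ) else 0 : ℤ) : ZMod 2) * A j k = if j = i then A j k else 0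
        split <;> simp)]
      simp
  · exact ⟨0, 0, fun u k => by simp, fun k => by simp⟩
  · rintro x y _ _ ⟨ε, c, hx, hc⟩ ⟨δ, d, hy, hd⟩
    refine ⟨fun k => ε k + δ k, fun k => (-1 : ℤ) ^ (ε k).val * d k + c k,
      fun u k => ?_, fun k => ?_⟩
    · exact bott_formula_mul hx hy u k
    · have h1 : ∀ j, (((-1 : ℤ) ^ (ε j).val * d j + c j : ℤ) : ZMod 2) = (d j : ZMod 2) + c j := by
        intro j
        push_cast
        have : ((-1 : ZMod 2)) ^ (ε j).val = 1 := by
          rw [show ((-1 : ZMod 2)) = 1 by decide, one_pow]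
        rw [this, one_mul]
      show ε k + δ k = ∑ j : Fin n, (((-1 : ℤ) ^ (ε j).val * d j + c j : ℤ) : ZMod 2) * A j k
      rw [Finset.sum_congr rfl (fun j _ => by rw [h1 j])]
      rw [hc, hd]
      rw [← Finset.sum_add_distrib]
      exact Finset.sum_congr rfl (fun j _ => by ring)
  · rintro x _ ⟨ε, c, hx, hc⟩
    have hsq : ∀ k, (-1 : ℝ) ^ (ε k).val * (-1 : ℝ) ^ (ε k).val = 1 := by
      intro k; rw [← pow_add]; exact Even.neg_one_pow ⟨(ε k).val, rfl⟩
    refine ⟨ε, fun k => -((-1 : ℤ) ^ (ε k).val * c k), fun u k => ?_, fun k => ?_⟩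
    · have key : x (fun k => (-1 : ℝ) ^ (ε k).val * u k +
          (-((-1 : ℤ) ^ (ε k).val * c k) : ℤ) / 2) = u := by
        funext j
        rw [hx]
        push_cast
        linear_combination (u j - (c j : ℝ) / 2) * hsq j
      have : x⁻¹ u = fun k => (-1 : ℝ) ^ (ε k).val * u k +
          (-((-1 : ℤ) ^ (ε k).val * c k) : ℤ) / 2 := by
        conv_lhs => rw [← key]
        exact x.symm_apply_apply _
      rw [this]
    · have h1 : ∀ j, ((-((-1 : ℤ) ^ (ε j).val * c j) : ℤ) : ZMod 2) = (c j : ZMod 2) := by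
        intro j
        push_cast
        have : ((-1 : ZMod 2)) ^ (ε j).val = 1 := by
          rw [show ((-1 : ZMod 2)) = 1 by decide, one_pow]
        rw [this, one_mul]
        exact (show ∀ x : ZMod 2, -x = x by decide) _
      rw [Finset.sum_congr rfl (fun j _ => by rw [h1 j]), hc]

lemma bott_floor {n : ℕ} {g : Equiv.Perm (Fin n → ℝ)} {ε : Fin n → ZMod 2} {c : Fin n → ℤ}
    (h : ∀ u k, g u k = (-1 : ℝ) ^ (ε k).val * u k + c k / 2) (k : Fin n) :
    ⌊2 * g 0 k⌋ = c k := by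
  rw [h]
  show ⌊2 * ((-1 : ℝ) ^ (ε k).val * (0 : Fin n → ℝ) k + c k / 2)⌋ = c k
  have : (0 : Fin n → ℝ) k = 0 := rfl
  rw [this]
  ring_nf
  exact Int.floor_intCast _

/-- with N ⊆ Γ(A) the normal subgroup of translations by ℤⁿ, the
quotient Γ(A)/N is isomorphic to (ℤ/2)ⁿ via the class of s_j ↦ j-th standard
generator; i.e. there is a short exact sequence 0 → ℤⁿ → Γ(A) → (ℤ/2)ⁿ → 1,
formalized as: there is a surjective homomorphism Γ(A) → (ℤ/2)ⁿ with kernel N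
sending s_j to the j-th standard generator. -/
theorem bott_quotient_elementary_abelian {n : ℕ} (A : Matrix (Fin n) (Fin n) (ZMod 2))
    (hA : ∀ i j : Fin n, j ≤ i → A i j = 0) :
    ∃ f : bottGroup A →* Multiplicative (Fin n → ZMod 2),
      Function.Surjective f ∧
      f.ker = (intTranslations n).subgroupOf (bottGroup A) ∧
      ∀ j : Fin n,
        f ⟨bottMotion A j, Subgroup.subset_closure (Set.mem_range_self j)⟩ =
          Multiplicative.ofAdd (Pi.single j (1 : ZMod 2)) := by
  classical
  set f : bottGroup A →* Multiplicative (Fin n → ZMod 2) :=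
    MonoidHom.mk' (fun g => Multiplicative.ofAdd fun k => ((⌊2 * g.1 0 k⌋ : ℤ) : ZMod 2))
      (by
        rintro ⟨g, hg⟩ ⟨h, hh⟩
        obtain ⟨ε, c, hgf, -⟩ := bott_struct A g hg
        obtain ⟨δ, d, hhf, -⟩ := bott_struct A h hh
        rw [← ofAdd_add]
        congr 1
        funext k
        have e1 : ⌊2 * g 0 k⌋ = c k := bott_floor hgf k
        have e2 : ⌊2 * h 0 k⌋ = d k := bott_floor hhf k
        have e3 : ⌊2 * (g * h) 0 k⌋ = (-1 : ℤ) ^ (ε k).val * d k + c k :=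
          bott_floor (bott_formula_mul hgf hhf) k
        show ((⌊2 * (g * h) 0 k⌋ : ℤ) : ZMod 2) = ((⌊2 * g 0 k⌋ : ℤ) : ZMod 2) + ((⌊2 * h 0 k⌋ : ℤ) : ZMod 2)
        rw [e1, e2, e3]
        push_cast
        rw [show ((-1 : ZMod 2)) = 1 by decide, one_pow]
        ring) with hf
  have hgen : ∀ j : Fin n,
      f ⟨bottMotion A j, Subgroup.subset_closure (Set.mem_range_self j)⟩ =
        Multiplicative.ofAdd (Pi.single j (1 : ZMod 2)) := by
    intro j
    rw [hf]
    show Multiplicative.ofAdd (fun k => ((⌊2 * bottMotion A j 0 k⌋ : ℤ) : ZMod 2)) = _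
    congr 1
    funext k
    have : ⌊2 * bottMotion A j 0 k⌋ = if k = j then 1 else 0 :=
      bott_floor (ε := fun k => A j k) (c := fun k => if k = j then 1 else 0)
        (fun u k => by
          show (-1 : ℝ) ^ (A j k).val * u k + (if k = j then 2⁻¹ else 0) = _
          by_cases hkj : k = j <;> simp [hkj] <;> norm_num) k
    rw [this, Pi.single_apply]
    split <;> simp
  refine ⟨f, ?_, ?_, hgen⟩
  · have hr : ∀ v : Fin n → ZMod 2, Multiplicative.ofAdd v ∈ f.range := by
      intro v
      have hv : v = ∑ j : Fin n, Pi.single j (v j) := (Finset.univ_sum_single v).symm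
      rw [hv, ofAdd_sum]
      refine Subgroup.prod_mem _ (fun j _ => ?_)
      rcases (show ∀ x : ZMod 2, x = 0 ∨ x = 1 by decide) (v j) with h | h
      · rw [h, Pi.single_zero]
        exact (show Multiplicative.ofAdd (0 : Fin n → ZMod 2) = 1 from rfl) ▸ one_mem _
      · rw [h]
        exact ⟨_, hgen j⟩
    intro m
    obtain ⟨g, hgq⟩ := hr (Multiplicative.toAdd m)
    exact ⟨g, by simpa using hgq⟩
  · ext ⟨g, hg⟩
    rw [MonoidHom.mem_ker, Subgroup.mem_subgroupOf]
    obtain ⟨ε, c, hgf, hc⟩ := bott_struct A g hg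
    constructor
    · intro h1
      have h2 : ∀ k, ((c k : ℤ) : ZMod 2) = 0 := by
        intro k
        have : (fun k => ((⌊2 * g 0 k⌋ : ℤ) : ZMod 2)) = (0 : Fin n → ZMod 2) := by
          have := congrArg Multiplicative.toAdd h1
          simpa [hf] using this
        have := congrFun this k
        rwa [bott_floor hgf k] at this
      have h3 : ∀ k, ε k = 0 := by
        intro k
        rw [hc k]
        exact Finset.sum_eq_zero (fun i _ => by rw [h2 i, zero_mul])
      have h4 : ∀ k, (2 : ℤ) ∣ c k := fun k =>
        (ZMod.intCast_zmod_eq_zero_iff_dvd (c k) 2).mp (h2 k)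
      refine ⟨fun k => c k / 2, fun x => ?_⟩
      funext k
      rw [hgf, h3 k]
      show (-1 : ℝ) ^ (0 : ZMod 2).val * x k + (c k : ℝ) / 2 = x k + ((c k / 2 : ℤ) : ℝ)
      rw [show ((0 : ZMod 2)).val = 0 from rfl, pow_zero, one_mul]
      congr 1
      obtain ⟨m, hm⟩ := h4 k
      rw [hm]
      push_cast
      rw [Int.mul_ediv_cancel_left m two_ne_zero]
      push_cast
      ring
    · rintro ⟨v, hv⟩
      rw [hf]
      show Multiplicative.ofAdd (fun k => ((⌊2 * g 0 k⌋ : ℤ) : ZMod 2)) = 1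
      have : ∀ k, ⌊2 * g 0 k⌋ = 2 * v k := by
        intro k
        rw [hv 0]
        show ⌊2 * ((0 : Fin n → ℝ) k + (v k : ℝ))⌋ = 2 * v k
        have : (0 : Fin n → ℝ) k = 0 := rfl
        rw [this, zero_add]
        rw [show (2 : ℝ) * (v k : ℝ) = ((2 * v k : ℤ) : ℝ) by push_cast; ring]
        exact Int.floor_intCast _
      have : (fun k => ((⌊2 * g 0 k⌋ : ℤ) : ZMod 2)) = (0 : Fin n → ZMod 2) := by
        funext k
        rw [this k]
        push_cast
        rw [show ((2 : ZMod 2)) = 0 by decide, zero_mul]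
        rfl
      rw [this]
      rfl
end

section
/- The orbit space ℝⁿ/Γ(A), i.e. the quotient topological space of ℝⁿ by the action of Γ(A), is compact. -/
/-- The square of a Bott motion is translation by a standard basis vector. -/
lemma bottMotion_sq {n : ℕ} (A : Matrix (Fin n) (Fin n) (ZMod 2))
    (hA : ∀ i j : Fin n, j ≤ i → A i j = 0) (i : Fin n) :
    bottMotion A i ^ 2 = Equiv.addRight (Pi.single i (1 : ℝ)) := by
  have hii : (A i i).val = 0 := by rw [hA i i le_rfl]; rfl
  apply Equiv.ext
  intro u
  funext j
  have h2 : (bottMotion A i ^ 2) u = bottMotion A i (bottMotion A i u) := by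
    rw [pow_two]; rfl
  rw [h2]
  simp only [bottMotion, Equiv.coe_fn_mk, Equiv.coe_addRight, Pi.add_apply, Pi.single_apply]
  by_cases hji : j = i
  · subst hji
    norm_num [hii]
    linarith
  · have h : ((-1 : ℝ) ^ (A i j).val) * ((-1 : ℝ) ^ (A i j).val) = 1 := by
      rw [← pow_add]
      exact Even.neg_one_pow ⟨(A i j).val, rfl⟩
    simp [hji, ← mul_assoc, h]

/-- Integer translations of single coordinates belong to the Bott group. -/
lemma bott_single_mem {n : ℕ} (A : Matrix (Fin n) (Fin n) (ZMod 2))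
    (hA : ∀ i j : Fin n, j ≤ i → A i j = 0) (i : Fin n) (m : ℤ) :
    Equiv.addRight (m • Pi.single i (1 : ℝ)) ∈ bottGroup A := by
  have hmem : bottMotion A i ∈ bottGroup A := Subgroup.subset_closure ⟨i, rfl⟩
  have h := Subgroup.zpow_mem (bottGroup A) hmem (2 * m)
  have zpow_addRight : ∀ (x : Fin n → ℝ) (m : ℤ), Equiv.addRight x ^ m = Equiv.addRight (m • x) := by
    intro x m
    induction m using Int.induction_on with
    | zero => ext u j; simp
    | succ k ih => rw [zpow_add_one, ih]; ext u j; simp [add_smul]; ring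
    | pred k ih => rw [zpow_sub_one, ih]; ext u j; simp [sub_smul]; ring
  rwa [zpow_mul, show ((2 : ℤ)) = ((2 : ℕ) : ℤ) by norm_num,
    zpow_natCast, bottMotion_sq A hA i, zpow_addRight] at h

/-- the orbit space ℝⁿ/Γ(A) (the quotient topological space of ℝⁿ by
the action of Γ(A)) is compact. -/
theorem bott_orbit_space_compact {n : ℕ} (A : Matrix (Fin n) (Fin n) (ZMod 2))
    (hA : ∀ i j : Fin n, j ≤ i → A i j = 0) :
    CompactSpace (Quotient (MulAction.orbitRel (bottGroup A) (Fin n → ℝ))) := by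
  rw [← isCompact_univ_iff]
  have hK : IsCompact (Set.Icc (0 : Fin n → ℝ) 1) := isCompact_Icc
  have hsurj : Set.univ =
      Quotient.mk (MulAction.orbitRel (bottGroup A) (Fin n → ℝ)) '' Set.Icc 0 1 := by
    apply Set.eq_of_subset_of_subset _ (Set.subset_univ _)
    rintro q -
    obtain ⟨u, rfl⟩ := Quotient.exists_rep q
    set k : Fin n → ℤ := fun j => -⌊u j⌋ with hk
    set g : Equiv.Perm (Fin n → ℝ) := Equiv.addRight (fun j => (k j : ℝ)) with hg
    have hsum : ∀ s : Finset (Fin n),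
        Equiv.addRight (∑ i ∈ s, (k i) • Pi.single i (1 : ℝ)) ∈ bottGroup A := by
      intro s
      induction s using Finset.cons_induction with
      | empty =>
          simp only [Finset.sum_empty, Equiv.addRight_zero]
          exact Subgroup.one_mem _
      | cons a s ha ih =>
          rw [Finset.sum_cons, Equiv.addRight_add]
          exact Subgroup.mul_mem _ ih (bott_single_mem A hA a (k a))
    have hgmem : g ∈ bottGroup A := by
      have hv : (fun j => (k j : ℝ)) = ∑ i : Fin n, (k i) • Pi.single i (1 : ℝ) := by
        funext j
        simp [Pi.single_apply, Finset.sum_ite_eq', zsmul_eq_mul]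
      rw [hg, hv]
      exact hsum Finset.univ
    have hgu : g u = fun j => Int.fract (u j) := by
      rw [hg]
      funext j
      simp only [Equiv.coe_addRight, Pi.add_apply, Int.fract, hk]
      push_cast
      ring
    refine ⟨g u, ?_, ?_⟩
    · rw [hgu]
      constructor
      · intro j; exact Int.fract_nonneg _
      · intro j; exact (Int.fract_lt_one _).le
    · exact Quotient.sound ⟨⟨g, hgmem⟩, rfl⟩
  rw [hsurj]
  exact hK.image continuous_quotient_mk'
end

section
/- Let A and B be strictly upper triangular n×n matrices with entries in {0,1}, and let P be an n×n matrix with entries in {0,1} with P_j^j = 1 for all j, such that modulo 2 one has B = PA and, for all j and all i < ℓ, P_j^ℓ B^i_ℓ = P_j^i B_j^ℓ + P_j^ℓ B_j^i + P_j^ℓ B_j^ℓ B_ℓ^i in ℤ/2. Then there exists a group homomorphism ρ : Γ(B) → Γ(A) satisfying ρ(t_r) = s₁^{P₁^r}s₂^{P₂^r}⋯sₙ^{Pₙ^r} for r = 1,…,n, where the entries P_i^r ∈ {0,1} are regarded as integers. -/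
namespace BottProof

lemma zc (x : ZMod 2) : x = 0 ∨ x = 1 := by
  have h : ∀ y : ZMod 2, y = 0 ∨ y = 1 := by decide
  exact h x

lemma val0 : (0 : ZMod 2).val = 0 := rfl
lemma val1 : (1 : ZMod 2).val = 1 := rfl

def usgn {n : ℕ} (B : Matrix (Fin n) (Fin n) (ZMod 2)) (b : Fin n → ℤ) (j : Fin n) : ℤˣ :=
  (-1) ^ (∑ i, b i * ((B i j).val : ℤ))

def mulB {n : ℕ} (B : Matrix (Fin n) (Fin n) (ZMod 2)) (a b : Fin n → ℤ) : Fin n → ℤ :=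
  fun j => b j + (usgn B b j : ℤ) * a j

def invB {n : ℕ} (B : Matrix (Fin n) (Fin n) (ZMod 2)) (a : Fin n → ℤ) : Fin n → ℤ :=
  fun j => -((usgn B a j : ℤ) * a j)

def nfu {G : Type*} [Group G] {m : ℕ} (g : Fin m → G) (a : Fin m → ℤ) : G :=
  (List.ofFn fun j => g j ^ a j).prod

lemma nf_zero {G : Type*} [Group G] {m : ℕ} (g : Fin m → G) :
    nfu g (fun _ => 0) = 1 := by
  simp [nfu]

lemma nf_single {G : Type*} [Group G] :
    ∀ {m : ℕ} (g : Fin m → G) (r : Fin m),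
      nfu g (fun j => if j = r then (1 : ℤ) else 0) = g r := by
  intro m
  induction m with
  | zero => intro g r; exact r.elim0
  | succ m ih =>
    intro g r
    rw [nfu, List.ofFn_succ, List.prod_cons]
    rcases Fin.eq_zero_or_eq_succ r with rfl | ⟨r', rfl⟩
    · have h1 : ∀ i : Fin m, (if i.succ = (0 : Fin (m+1)) then (1:ℤ) else 0) = 0 :=
        fun i => by simp [Fin.succ_ne_zero]
      simp only [h1]
      simp
    · have h0 : ((0 : Fin (m+1)) = r'.succ) = False := by
        simp [Ne.symm (Fin.succ_ne_zero r')]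
      have h1 : (fun i : Fin m => g i.succ ^ (if i.succ = r'.succ then (1:ℤ) else 0))
          = fun i : Fin m => (fun i' : Fin m => g i'.succ) i ^ (if i = r' then (1:ℤ) else 0) := by
        funext i; simp [Fin.succ_inj]
      rw [if_neg (Ne.symm (Fin.succ_ne_zero r')), zpow_zero, one_mul, h1]
      exact ih (fun i' => g i'.succ) r'

end BottProof


namespace BottProof

section Swap
variable {G : Type*} [Group G]

lemma units_sq (e : ℤˣ) : (e : ℤ) * (e : ℤ) = 1 := by
  rcases Int.units_eq_one_or e with rfl | rfl <;> norm_num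

lemma units_inv_self (e : ℤˣ) : e⁻¹ = e := by
  rcases Int.units_eq_one_or e with rfl | rfl <;> norm_num

lemma conj_fact {x y : G} {e : ℤˣ} (h : y * x = x * y ^ (e : ℤ)) :
    ∀ M : ℤ, y ^ M * x = x * y ^ ((e : ℤ) * M) := by
  have h1 : x⁻¹ * (y * x) = y ^ (e : ℤ) := by
    rw [h, ← mul_assoc, inv_mul_cancel, one_mul]
  intro M
  have h2 : x⁻¹ * (y ^ M * x) = (x⁻¹ * (y * x)) ^ M := by
    have h3 := map_zpow (MulAut.conj x⁻¹) y M
    simpa [MulAut.conj_apply, mul_assoc] using h3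
  have h4 : x⁻¹ * (y ^ M * x) = y ^ ((e : ℤ) * M) := by
    rw [h2, h1, ← zpow_mul]
  calc y ^ M * x = x * (x⁻¹ * (y ^ M * x)) := by group
    _ = x * y ^ ((e : ℤ) * M) := by rw [h4]

lemma conj_fact_inv {x y : G} {e : ℤˣ} (h : y * x = x * y ^ (e : ℤ)) :
    ∀ M : ℤ, y ^ M * x⁻¹ = x⁻¹ * y ^ ((e : ℤ) * M) := by
  intro M
  have h1 := conj_fact h ((e : ℤ) * M)
  have h2 : (e : ℤ) * ((e : ℤ) * M) = M := by
    rw [← mul_assoc, units_sq, one_mul]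
  rw [h2] at h1
  calc y ^ M * x⁻¹ = x⁻¹ * (y ^ ((e:ℤ) * M) * x) * x⁻¹ := by rw [h1]; group
    _ = x⁻¹ * y ^ ((e : ℤ) * M) := by group

lemma swap_pow {x y : G} {e : ℤˣ} (h : y * x = x * y ^ (e : ℤ)) :
    ∀ (b m : ℤ), y ^ m * x ^ b = x ^ b * y ^ (((e ^ b : ℤˣ) : ℤ) * m) := by
  intro b
  induction b using Int.induction_on with
  | zero => intro m; simp
  | succ b ih =>
    intro m
    have e1 : x ^ ((b : ℤ) + 1) = x ^ (b : ℤ) * x := zpow_add_one x b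
    rw [e1, ← mul_assoc, ih m, mul_assoc, conj_fact h, ← mul_assoc, ← e1]
    congr 1
    rw [zpow_add_one, Units.val_mul]
    ring
  | pred b ih =>
    intro m
    have e1 : x ^ (-(b : ℤ) - 1) = x ^ (-(b : ℤ)) * x⁻¹ := zpow_sub_one x (-b)
    rw [e1, ← mul_assoc, ih m, mul_assoc, conj_fact_inv h, ← mul_assoc, ← e1]
    congr 1
    rw [zpow_sub_one, units_inv_self, Units.val_mul]
    ring

lemma pull_lemma :
    ∀ {m : ℕ} (g : Fin m → G) (h : G) (c : Fin m → ℤˣ)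
      (_ : ∀ (j : Fin m) (M : ℤ), g j ^ M * h = h * g j ^ ((c j : ℤ) * M))
      (a : Fin m → ℤ),
      (List.ofFn fun j => g j ^ a j).prod * h
        = h * (List.ofFn fun j => g j ^ ((c j : ℤ) * a j)).prod := by
  intro m
  induction m with
  | zero => intro g h c comm a; simp
  | succ m ih =>
    intro g h c comm a
    rw [List.ofFn_succ, List.ofFn_succ, List.prod_cons, List.prod_cons, mul_assoc,
      ih (fun i => g i.succ) h (fun i => c i.succ) (fun i M => comm i.succ M)
        (fun i => a i.succ),
      ← mul_assoc, comm 0 (a 0), mul_assoc]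

end Swap

end BottProof

namespace BottProof

lemma usgn_zero_col {n : ℕ} (B : Matrix (Fin (n+1)) (Fin (n+1)) (ZMod 2))
    (hB : ∀ i j : Fin (n+1), j ≤ i → B i j = 0) (b : Fin (n+1) → ℤ) :
    usgn B b 0 = 1 := by
  unfold usgn
  have h : ∀ i : Fin (n+1), b i * ((B i 0).val : ℤ) = 0 := by
    intro i
    rw [hB i 0 (Fin.zero_le _)]
    simp [val0]
  rw [Finset.sum_congr rfl (fun i _ => h i), Finset.sum_const_zero, zpow_zero]

lemma mulB_zero {n : ℕ} (B : Matrix (Fin (n+1)) (Fin (n+1)) (ZMod 2))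
    (hB : ∀ i j : Fin (n+1), j ≤ i → B i j = 0) (a b : Fin (n+1) → ℤ) :
    mulB B a b 0 = a 0 + b 0 := by
  unfold mulB
  rw [usgn_zero_col B hB b]
  push_cast
  ring

lemma usgn_succ {n : ℕ} (B : Matrix (Fin (n+1)) (Fin (n+1)) (ZMod 2))
    (b : Fin (n+1) → ℤ) (j : Fin n) :
    usgn B b j.succ
      = (-1 : ℤˣ) ^ (((B 0 j.succ).val : ℤ) * b 0)
          * usgn (B.submatrix Fin.succ Fin.succ) (fun i => b i.succ) j := by
  unfold usgn
  rw [Fin.sum_univ_succ, zpow_add, mul_comm (b 0) (((B 0 j.succ).val : ℤ))]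
  rfl

lemma mulB_succ {n : ℕ} (B : Matrix (Fin (n+1)) (Fin (n+1)) (ZMod 2))
    (a b : Fin (n+1) → ℤ) (j : Fin n) :
    mulB B a b j.succ
      = mulB (B.submatrix Fin.succ Fin.succ)
          (fun i => (((-1 : ℤˣ) ^ (((B 0 i.succ).val : ℤ) * b 0) : ℤˣ) : ℤ) * a i.succ)
          (fun i => b i.succ) j := by
  unfold mulB
  rw [usgn_succ]
  push_cast [Units.val_mul]
  ring

lemma nf_mul {G : Type*} [Group G] :
    ∀ (n : ℕ) (B : Matrix (Fin n) (Fin n) (ZMod 2))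
      (_ : ∀ i j : Fin n, j ≤ i → B i j = 0) (g : Fin n → G)
      (_ : ∀ i ℓ : Fin n, i < ℓ →
        g ℓ * g i = g i * g ℓ ^ ((((-1 : ℤˣ) ^ (B i ℓ).val) : ℤˣ) : ℤ))
      (a b : Fin n → ℤ),
      nfu g a * nfu g b = nfu g (mulB B a b) := by
  intro n
  induction n with
  | zero =>
    intro B hB g rel a b
    simp [nfu]
  | succ n ih =>
    intro B hB g rel a b
    have hB' : ∀ i j : Fin n, j ≤ i → (B.submatrix Fin.succ Fin.succ) i j = 0 :=
      fun i j hij => hB _ _ (Fin.succ_le_succ_iff.mpr hij)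
    have rel' : ∀ i ℓ : Fin n, i < ℓ →
        (fun i' : Fin n => g i'.succ) ℓ * (fun i' : Fin n => g i'.succ) i
          = (fun i' : Fin n => g i'.succ) i
              * (fun i' : Fin n => g i'.succ) ℓ
                ^ ((((-1 : ℤˣ) ^ ((B.submatrix Fin.succ Fin.succ) i ℓ).val) : ℤˣ) : ℤ) :=
      fun i ℓ hil => rel _ _ (Fin.succ_lt_succ_iff.mpr hil)
    have comm : ∀ (j : Fin n) (M : ℤ),
        (fun i' : Fin n => g i'.succ) j ^ M * g 0 ^ b 0
          = g 0 ^ b 0 * (fun i' : Fin n => g i'.succ) j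
              ^ ((((-1 : ℤˣ) ^ (((B 0 j.succ).val : ℤ) * b 0) : ℤˣ) : ℤ) * M) := by
      intro j M
      have hrel0 := rel 0 j.succ (Fin.succ_pos j)
      have hs := swap_pow hrel0 (b 0) M
      rw [hs]
      congr 2
      rw [zpow_mul, zpow_natCast]
    have hpull := pull_lemma (fun i' : Fin n => g i'.succ) (g 0 ^ b 0)
        (fun j => (-1 : ℤˣ) ^ (((B 0 j.succ).val : ℤ) * b 0)) comm (fun i => a i.succ)
    have hih := ih (B.submatrix Fin.succ Fin.succ) hB' (fun i' : Fin n => g i'.succ) rel'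
        (fun i => (((-1 : ℤˣ) ^ (((B 0 i.succ).val : ℤ) * b 0) : ℤˣ) : ℤ) * a i.succ)
        (fun i => b i.succ)
    unfold nfu at hih ⊢
    rw [List.ofFn_succ, List.ofFn_succ, List.ofFn_succ, List.prod_cons, List.prod_cons,
      List.prod_cons]
    calc (g 0 ^ a 0 * (List.ofFn fun i : Fin n => g i.succ ^ a i.succ).prod)
          * (g 0 ^ b 0 * (List.ofFn fun i : Fin n => g i.succ ^ b i.succ).prod)
        = g 0 ^ a 0 * (((List.ofFn fun i : Fin n => g i.succ ^ a i.succ).prod * g 0 ^ b 0)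
            * (List.ofFn fun i : Fin n => g i.succ ^ b i.succ).prod) := by
          group
      _ = g 0 ^ a 0 * ((g 0 ^ b 0 * (List.ofFn fun i : Fin n =>
              g i.succ ^ ((((-1 : ℤˣ) ^ (((B 0 i.succ).val : ℤ) * b 0) : ℤˣ) : ℤ) * a i.succ)).prod)
            * (List.ofFn fun i : Fin n => g i.succ ^ b i.succ).prod) := by
          rw [hpull]
      _ = (g 0 ^ a 0 * g 0 ^ b 0) * ((List.ofFn fun i : Fin n =>
              g i.succ ^ ((((-1 : ℤˣ) ^ (((B 0 i.succ).val : ℤ) * b 0) : ℤˣ) : ℤ) * a i.succ)).prod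
            * (List.ofFn fun i : Fin n => g i.succ ^ b i.succ).prod) := by
          group
      _ = g 0 ^ (a 0 + b 0) * (List.ofFn fun i : Fin n =>
              g i.succ ^ (mulB (B.submatrix Fin.succ Fin.succ)
                (fun i' => (((-1 : ℤˣ) ^ (((B 0 i'.succ).val : ℤ) * b 0) : ℤˣ) : ℤ) * a i'.succ)
                (fun i' => b i'.succ) i)).prod := by
          rw [hih, ← zpow_add]
      _ = g 0 ^ (mulB B a b 0) * (List.ofFn fun i : Fin n => g i.succ ^ (mulB B a b i.succ)).prod := by
          rw [mulB_zero B hB a b]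
          have hfun : (fun i : Fin n => g i.succ ^
              mulB (B.submatrix Fin.succ Fin.succ)
                (fun i' => (((-1 : ℤˣ) ^ (((B 0 i'.succ).val : ℤ) * b 0) : ℤˣ) : ℤ) * a i'.succ)
                (fun i' => b i'.succ) i)
              = fun i : Fin n => g i.succ ^ mulB B a b i.succ := by
            funext i
            rw [← mulB_succ B a b i]
          rw [hfun]

end BottProof

namespace BottProof

section Eval
variable {n : ℕ} (B : Matrix (Fin n) (Fin n) (ZMod 2))

lemma motion_apply (j : Fin n) (u : Fin n → ℝ) (k : Fin n) :
    bottMotion B j u k = (-1 : ℝ) ^ (B j k).val * u k + (if k = j then 2⁻¹ else 0) := rfl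

lemma motion_inv_apply (j : Fin n) (u : Fin n → ℝ) (k : Fin n) :
    (bottMotion B j)⁻¹ u k
      = (-1 : ℝ) ^ (B j k).val * (u k - if k = j then 2⁻¹ else 0) := rfl

lemma motion_zpow_apply (hBd : ∀ j, B j j = 0) (j : Fin n) :
    ∀ (m : ℤ) (u : Fin n → ℝ) (k : Fin n),
      (bottMotion B j ^ m) u k =
        (-1 : ℝ) ^ (m * ((B j k).val : ℤ)) * u k + (if k = j then (m : ℝ) / 2 else 0) := by
  intro m
  induction m using Int.induction_on with
  | zero => intro u k; simp
  | succ m ih =>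
    intro u k
    rw [zpow_add_one, Equiv.Perm.mul_apply, ih, motion_apply]
    by_cases hk : k = j
    · subst hk
      rw [hBd k]
      simp only [val0, Nat.cast_zero, mul_zero, zpow_zero, pow_zero, if_pos rfl]
      push_cast
      ring
    · simp only [if_neg hk, add_zero]
      rw [← zpow_natCast (-1:ℝ) ((B j k).val), ← mul_assoc,
        ← zpow_add₀ (by norm_num : (-1:ℝ) ≠ 0)]
      congr 2
      ring
  | pred m ih =>
    intro u k
    rw [zpow_sub_one, Equiv.Perm.mul_apply, ih, motion_inv_apply]
    by_cases hk : k = j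
    · subst hk
      rw [hBd k]
      simp only [val0, Nat.cast_zero, mul_zero, zpow_zero, pow_zero, if_pos rfl]
      push_cast
      ring
    · simp only [if_neg hk, sub_zero, add_zero]
      rw [← zpow_natCast (-1:ℝ) ((B j k).val), ← mul_assoc,
        ← zpow_add₀ (by norm_num : (-1:ℝ) ≠ 0)]
      congr 1
      rw [show -(↑m : ℤ) * ((B j k).val : ℤ) + ((B j k).val : ℤ)
            = (-(↑m : ℤ) - 1) * ((B j k).val : ℤ) + 2 * ((B j k).val : ℤ) by ring,
        zpow_add₀ (by norm_num : (-1:ℝ) ≠ 0),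
        show (-1:ℝ) ^ (2 * ((B j k).val : ℤ)) = 1 by rw [zpow_mul]; norm_num, mul_one]

lemma eval_aux (hB : ∀ i j : Fin n, j ≤ i → B i j = 0) (a : Fin n → ℤ) :
    ∀ (m : ℕ) (hm : m ≤ n) (u : Fin n → ℝ) (k : Fin n),
      ((List.ofFn fun j : Fin m =>
          bottMotion B (Fin.castLE hm j) ^ a (Fin.castLE hm j)).prod) u k =
        (-1 : ℝ) ^ (∑ j : Fin m, a (Fin.castLE hm j) * ((B (Fin.castLE hm j) k).val : ℤ)) *
          (u k + if (k : ℕ) < m then (a k : ℝ) / 2 else 0) := by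
  intro m
  induction m with
  | zero => intro hm u k; simp
  | succ m ih =>
    intro hm u k
    have hm' : m ≤ n := Nat.le_of_succ_le hm
    have hcast : ∀ i : Fin m, Fin.castLE hm (Fin.castSucc i) = Fin.castLE hm' i :=
      fun i => rfl
    set J : Fin n := Fin.castLE hm (Fin.last m) with hJ
    have hJval : (J : ℕ) = m := rfl
    rw [List.ofFn_succ', List.prod_concat, Equiv.Perm.mul_apply]
    have hlist : (List.ofFn fun i : Fin m =>
          bottMotion B (Fin.castLE hm (Fin.castSucc i)) ^ a (Fin.castLE hm (Fin.castSucc i)))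
        = List.ofFn fun i : Fin m =>
          bottMotion B (Fin.castLE hm' i) ^ a (Fin.castLE hm' i) := rfl
    rw [hlist, ih hm', motion_zpow_apply B (fun j => hB j j le_rfl) J]
    rw [Fin.sum_univ_castSucc]
    simp only [hcast]
    rw [zpow_add₀ (by norm_num : (-1:ℝ) ≠ 0)]
    rcases lt_trichotomy (k : ℕ) m with h | h | h
    · have hkJ : ¬ (k = J) := by
        intro he; rw [he, hJval] at h; omega
      have hBJk : B J k = 0 := hB J k (by rw [Fin.le_def, hJval]; omega)
      rw [hBJk]
      simp only [val0, Nat.cast_zero, mul_zero, zpow_zero, if_neg hkJ,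
        if_pos h, if_pos (by omega : (k:ℕ) < m + 1)]
      ring
    · have hkJ : k = J := by
        apply Fin.ext; rw [hJval]; exact h
      have hBJk : B J k = 0 := by rw [hkJ]; exact hB J J le_rfl
      rw [hBJk]
      simp only [val0, Nat.cast_zero, mul_zero, zpow_zero, if_pos hkJ,
        if_neg (by omega : ¬ (k:ℕ) < m), if_pos (by omega : (k:ℕ) < m + 1)]
      have haJ : a J = a k := by rw [hkJ]
      rw [haJ]
      ring
    · have hkJ : ¬ (k = J) := by
        intro he; rw [he, hJval] at h; omega
      simp only [if_neg hkJ, if_neg (by omega : ¬ (k:ℕ) < m),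
        if_neg (by omega : ¬ (k:ℕ) < m + 1)]
      ring

lemma eval_nf (hB : ∀ i j : Fin n, j ≤ i → B i j = 0) (a : Fin n → ℤ)
    (u : Fin n → ℝ) (k : Fin n) :
    nfu (bottMotion B) a u k =
      (-1 : ℝ) ^ (∑ j, a j * ((B j k).val : ℤ)) * (u k + (a k : ℝ) / 2) := by
  have h := eval_aux B hB a n le_rfl u k
  have hc : ∀ j : Fin n, Fin.castLE le_rfl j = j := fun j => rfl
  simp only [hc] at h
  rw [nfu]
  rw [h, if_pos k.isLt]

lemma nf_inj (hB : ∀ i j : Fin n, j ≤ i → B i j = 0) :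
    Function.Injective (fun a => nfu (bottMotion B) a) := by
  intro a b h
  funext k
  have h0 := congrFun (congrArg (fun (f : Equiv.Perm (Fin n → ℝ)) => f (fun _ => (0:ℝ))) h) k
  have h1 := congrFun (congrArg (fun (f : Equiv.Perm (Fin n → ℝ)) => f (fun _ => (1:ℝ))) h) k
  simp only at h0 h1
  rw [eval_nf B hB a, eval_nf B hB b] at h0 h1
  set sa : ℝ := (-1 : ℝ) ^ (∑ j, a j * ((B j k).val : ℤ)) with hsa
  set sb : ℝ := (-1 : ℝ) ^ (∑ j, b j * ((B j k).val : ℤ)) with hsb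
  have hsel : sa = sb := by nlinarith [h0, h1]
  have hne : sa ≠ 0 := by
    rw [hsa]; exact zpow_ne_zero _ (by norm_num)
  rw [← hsel] at h0
  have : (a k : ℝ) = b k := by
    have h2 := mul_left_cancel₀ hne h0
    nlinarith [h2]
  exact_mod_cast this

end Eval

end BottProof

namespace BottProof

lemma neg_one_zpow_congr (N : ℤ) (x : ZMod 2) (h : (N : ZMod 2) = x) :
    (-1 : ℝ) ^ N = (-1 : ℝ) ^ x.val := by
  rcases Int.even_or_odd N with he | ho
  · have hx : x = 0 := by
      rw [← h, ZMod.intCast_zmod_eq_zero_iff_dvd]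
      exact_mod_cast he.two_dvd
    rw [hx, val0, pow_zero, Even.neg_one_zpow he]
  · have hx : x = 1 := by
      rw [← h]
      obtain ⟨t, rfl⟩ := ho
      push_cast
      rw [show (2 : ZMod 2) = 0 by decide]
      ring
    rw [hx, val1, pow_one, Odd.neg_one_zpow ho]

lemma c_eval {n : ℕ} (A B P : Matrix (Fin n) (Fin n) (ZMod 2))
    (hA : ∀ i j : Fin n, j ≤ i → A i j = 0) (hBA : B = P * A)
    (r : Fin n) (u : Fin n → ℝ) (k : Fin n) :
    nfu (bottMotion A) (fun i' => ((P r i').val : ℤ)) u k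
      = (-1 : ℝ) ^ (B r k).val * (u k + ((P r k).val : ℝ) / 2) := by
  rw [eval_nf A hA]
  have hs : ((∑ j, ((P r j).val : ℤ) * ((A j k).val : ℤ) : ℤ) : ZMod 2) = B r k := by
    push_cast
    simp only [ZMod.natCast_val, ZMod.cast_id]
    rw [hBA, Matrix.mul_apply]
  rw [neg_one_zpow_congr _ _ hs]
  norm_num

lemma rel_t {n : ℕ} (B : Matrix (Fin n) (Fin n) (ZMod 2))
    (hB : ∀ i j : Fin n, j ≤ i → B i j = 0) :
    ∀ i ℓ : Fin n, i < ℓ →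
      bottMotion B ℓ * bottMotion B i
        = bottMotion B i * bottMotion B ℓ ^ ((((-1 : ℤˣ) ^ (B i ℓ).val) : ℤˣ) : ℤ) := by
  intro i ℓ hil
  have hBli : B ℓ i = 0 := hB ℓ i hil.le
  have hBll : B ℓ ℓ = 0 := hB ℓ ℓ le_rfl
  have hBii : B i i = 0 := hB i i le_rfl
  have hne : i ≠ ℓ := ne_of_lt hil
  rcases zc (B i ℓ) with hx | hx
  · rw [hx, val0, pow_zero, show (((1 : ℤˣ)) : ℤ) = 1 from rfl, zpow_one]
    refine Equiv.ext fun u => funext fun k => ?_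
    simp only [Equiv.Perm.mul_apply, motion_apply]
    by_cases hki : k = i
    · subst hki
      rw [hBli, hBii, val0, if_pos rfl, if_neg hne]
      norm_num
    · by_cases hkl : k = ℓ
      · subst hkl
        rw [hBll, hx, val0, if_pos rfl, if_neg (Ne.symm hne)]
        norm_num
      · rw [if_neg hki, if_neg hkl]
        ring
  · rw [hx, val1, pow_one, show (((-1 : ℤˣ)) : ℤ) = -1 from rfl, zpow_neg_one,
      eq_mul_inv_iff_mul_eq]
    refine Equiv.ext fun u => funext fun k => ?_
    simp only [Equiv.Perm.mul_apply, motion_apply]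
    by_cases hki : k = i
    · subst hki
      rw [hBli, hBii, val0, if_pos rfl, if_neg hne]
      norm_num
    · by_cases hkl : k = ℓ
      · subst hkl
        rw [hBll, hx, val0, val1, if_pos rfl, if_neg (Ne.symm hne)]
        norm_num
      · rw [if_neg hki, if_neg hkl]
        rcases zc (B ℓ k) with h1 | h1 <;> rcases zc (B i k) with h2 | h2 <;>
          rw [h1, h2] <;> simp only [val0, val1] <;> ring

lemma rel_c {n : ℕ} (A B P : Matrix (Fin n) (Fin n) (ZMod 2))
    (hA : ∀ i j : Fin n, j ≤ i → A i j = 0) (hB : ∀ i j : Fin n, j ≤ i → B i j = 0)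
    (hBA : B = P * A)
    (hrel : ∀ j i ℓ : Fin n, i < ℓ →
      P ℓ j * B i ℓ = P i j * B ℓ j + P ℓ j * B i j + P ℓ j * B ℓ j * B i ℓ) :
    ∀ i ℓ : Fin n, i < ℓ →
      (fun r => nfu (bottMotion A) (fun i' => ((P r i').val : ℤ))) ℓ
          * (fun r => nfu (bottMotion A) (fun i' => ((P r i').val : ℤ))) i
        = (fun r => nfu (bottMotion A) (fun i' => ((P r i').val : ℤ))) i
            * (fun r => nfu (bottMotion A) (fun i' => ((P r i').val : ℤ))) ℓ
              ^ ((((-1 : ℤˣ) ^ (B i ℓ).val) : ℤˣ) : ℤ) := by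
  intro i ℓ hil
  simp only
  rcases zc (B i ℓ) with hx | hx
  · rw [hx, val0, pow_zero, show (((1 : ℤˣ)) : ℤ) = 1 from rfl, zpow_one]
    refine Equiv.ext fun u => funext fun k => ?_
    simp only [Equiv.Perm.mul_apply, c_eval A B P hA hBA]
    have h := hrel k i ℓ hil
    rw [hx] at h
    rcases zc (B ℓ k) with hy | hy <;> rcases zc (B i k) with hz | hz <;>
      rcases zc (P i k) with hp | hp <;> rcases zc (P ℓ k) with hq | hq <;>
      rw [hy, hz, hp, hq] at h ⊢ <;>
      first
        | (exfalso; revert h; decide)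
        | (simp only [val0, val1]; norm_num)
        | (simp only [val0, val1]; ring)
  · rw [hx, val1, pow_one, show (((-1 : ℤˣ)) : ℤ) = -1 from rfl, zpow_neg_one,
      eq_mul_inv_iff_mul_eq]
    refine Equiv.ext fun u => funext fun k => ?_
    simp only [Equiv.Perm.mul_apply, c_eval A B P hA hBA]
    have h := hrel k i ℓ hil
    rw [hx] at h
    rcases zc (B ℓ k) with hy | hy <;> rcases zc (B i k) with hz | hz <;>
      rcases zc (P i k) with hp | hp <;> rcases zc (P ℓ k) with hq | hq <;>
      rw [hy, hz, hp, hq] at h ⊢ <;>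
      first
        | (exfalso; revert h; decide)
        | (simp only [val0, val1]; norm_num)
        | (simp only [val0, val1]; ring)

end BottProof

open BottProof

/-- given strictly upper triangular A, B and P with unit diagonal
satisfying B = PA (mod 2) and the compatibility relations
P_j^ℓ B^i_ℓ = P_j^i B_j^ℓ + P_j^ℓ B_j^i + P_j^ℓ B_j^ℓ B_ℓ^i (i < ℓ) in ℤ/2,
there is a group homomorphism ρ : Γ(B) → Γ(A) with
ρ(t_r) = s₁^{P₁^r}⋯sₙ^{Pₙ^r} (the entries of P regarded as the integers 0, 1).
(Here M^i_j denotes the entry `M i j`, with superscript the row index.) -/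
theorem bott_fundamental_group_hom {n : ℕ}
    (A B : Matrix (Fin n) (Fin n) (ZMod 2))
    (hA : ∀ i j : Fin n, j ≤ i → A i j = 0) (hB : ∀ i j : Fin n, j ≤ i → B i j = 0)
    (P : Matrix (Fin n) (Fin n) (ZMod 2)) (hP : ∀ j, P j j = 1)
    (hBA : B = P * A)
    (hrel : ∀ j i ℓ : Fin n, i < ℓ →
      P ℓ j * B i ℓ = P i j * B ℓ j + P ℓ j * B i j + P ℓ j * B ℓ j * B i ℓ) :
    ∃ ρ : bottGroup B →* bottGroup A,
      ∀ r : Fin n,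
        ((ρ ⟨bottMotion B r, Subgroup.subset_closure (Set.mem_range_self r)⟩ :
            bottGroup A) : Equiv.Perm (Fin n → ℝ)) =
          (List.ofFn fun i => bottMotion A i ^ (P r i).val).prod := by
  classical
  have hrelt := rel_t B hB
  have hrelc := rel_c A B P hA hB hBA hrel
  have hinj := nf_inj B hB
  have hmemc : ∀ r : Fin n,
      nfu (bottMotion A) (fun i' => ((P r i').val : ℤ)) ∈ bottGroup A := by
    intro r
    unfold nfu
    apply Subgroup.list_prod_mem
    intro x hx
    rw [List.mem_ofFn] at hx
    obtain ⟨i, rfl⟩ := hx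
    exact zpow_mem (Subgroup.subset_closure (Set.mem_range_self i)) _
  have hmemPsi : ∀ a : Fin n → ℤ,
      nfu (fun r => nfu (bottMotion A) (fun i' => ((P r i').val : ℤ))) a ∈ bottGroup A := by
    intro a
    unfold nfu
    apply Subgroup.list_prod_mem
    intro x hx
    rw [List.mem_ofFn] at hx
    obtain ⟨r, rfl⟩ := hx
    exact zpow_mem (hmemc r) _
  let SB : Subgroup (Equiv.Perm (Fin n → ℝ)) :=
    { carrier := Set.range (fun a : Fin n → ℤ => nfu (bottMotion B) a)
      one_mem' := ⟨(fun _ => 0), nf_zero (bottMotion B)⟩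
      mul_mem' := by
        rintro x y ⟨a, rfl⟩ ⟨b, rfl⟩
        exact ⟨mulB B a b, (nf_mul n B hB (bottMotion B) hrelt a b).symm⟩
      inv_mem' := by
        rintro x ⟨a, rfl⟩
        refine ⟨invB B a, ?_⟩
        have hmm : mulB B (invB B a) a = fun _ => 0 := by
          funext j
          unfold mulB invB
          have hsq := units_sq (usgn B a j)
          linear_combination (-(a j)) * hsq
        have h1 : nfu (bottMotion B) (invB B a) * nfu (bottMotion B) a = 1 := by
          rw [nf_mul n B hB (bottMotion B) hrelt, hmm, nf_zero]
        exact (inv_eq_of_mul_eq_one_left h1).symm }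
  have hle : bottGroup B ≤ SB := by
    apply (Subgroup.closure_le SB).mpr
    rintro x ⟨r, rfl⟩
    exact ⟨(fun j => if j = r then 1 else 0), nf_single (bottMotion B) r⟩
  have hex : ∀ x : bottGroup B,
      ∃ a : Fin n → ℤ, nfu (bottMotion B) a = (x : Equiv.Perm (Fin n → ℝ)) :=
    fun x => hle x.2
  choose f hf using hex
  refine ⟨{ toFun := fun x =>
              ⟨nfu (fun r => nfu (bottMotion A) (fun i' => ((P r i').val : ℤ))) (f x),
                hmemPsi (f x)⟩
          , map_one' := ?_
          , map_mul' := ?_ }, ?_⟩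
  · have h1 : f 1 = fun _ => 0 := by
      apply hinj
      show nfu (bottMotion B) (f 1) = nfu (bottMotion B) (fun _ => 0)
      rw [hf 1, nf_zero]
      simp
    apply Subtype.ext
    show nfu _ (f 1) = 1
    rw [h1, nf_zero]
  · intro x y
    have h1 : f (x * y) = mulB B (f x) (f y) := by
      apply hinj
      show nfu (bottMotion B) (f (x * y)) = nfu (bottMotion B) (mulB B (f x) (f y))
      rw [hf (x * y), ← nf_mul n B hB (bottMotion B) hrelt, hf x, hf y]
      simp
    apply Subtype.ext
    show nfu _ (f (x * y)) = _
    rw [h1, ← nf_mul n B hB (fun r => nfu (bottMotion A) (fun i' => ((P r i').val : ℤ)))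
      hrelc (f x) (f y)]
    rfl
  · intro r
    have h1 : f ⟨bottMotion B r, Subgroup.subset_closure (Set.mem_range_self r)⟩
        = fun j => if j = r then 1 else 0 := by
      apply hinj
      show nfu (bottMotion B) _ = nfu (bottMotion B) _
      rw [hf, nf_single (bottMotion B) r]
    show nfu (fun r' => nfu (bottMotion A) (fun i' => ((P r' i').val : ℤ))) _ = _
    rw [h1, nf_single (fun r' => nfu (bottMotion A) (fun i' => ((P r' i').val : ℤ))) r]
    unfold nfu
    simp only [zpow_natCast]
end

section
/- For every group homomorphism φ : (ℤ/2)ⁿ → Aut(ℤ) = {±1}, the second group cohomology H²((ℤ/2)ⁿ; ℤ_φ) is an elementary abelian 2-group; that is, every element x of H²((ℤ/2)ⁿ; ℤ_φ) satisfies 2x = 0. -/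
/-- The rank-one representation ℤ_φ of a group G on ℤ determined by a sign
homomorphism φ : G → Aut(ℤ) = {±1} = ℤˣ: g acts by multiplication by φ(g). -/
def signRep {G : Type*} [Group G] (φ : G →* ℤˣ) : Representation ℤ G ℤ where
  toFun g := ((φ g : ℤ)) • (LinearMap.id : ℤ →ₗ[ℤ] ℤ)
  map_one' := by
    simp only [map_one, Units.val_one, one_smul]
    rfl
  map_mul' g h := by
    refine LinearMap.ext fun x => ?_
    simp [mul_smul]

/-- for every homomorphism φ : (ℤ/2)ⁿ → Aut(ℤ) = {±1}, the second
group cohomology H²((ℤ/2)ⁿ; ℤ_φ) is an elementary abelian 2-group: 2x = 0 for all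
of its elements x. -/
theorem second_cohomology_of_sign_rep_two_torsion {n : ℕ}
    (φ : Multiplicative (Fin n → ZMod 2) →* ℤˣ) :
    ∀ x : (groupCohomology (Rep.of (signRep φ)) 2), x + x = 0 := by
  set G := Multiplicative (Fin n → ZMod 2)
  set A : Rep ℤ G := Rep.of (signRep φ) with hA
  have hρ : ∀ (g : G) (y : ℤ), A.ρ g y = (φ g : ℤ) * y := fun g y => rfl
  have hz2 : ∀ x : ZMod 2, x + x = 0 := by decide
  have hsq : ∀ g : G, g * g = 1 := by
    intro g
    apply Multiplicative.toAdd.injective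
    funext i
    simp only [toAdd_mul, toAdd_one, Pi.add_apply, Pi.zero_apply]
    exact hz2 _
  intro x
  induction x using groupCohomology.H2_induction_on with | h f => ?_
  rw [← map_add, groupCohomology.H2π_eq_zero_iff]
  suffices hsuff : ∃ y : G → ℤ, ∀ g h : G,
      (groupCohomology.d₁₂ A).hom y (g, h) = (f + f : groupCohomology.cocycles₂ A) (g, h) by
    obtain ⟨y, hy⟩ := hsuff
    exact ⟨y, funext fun p => hy p.1 p.2⟩
  let F : G × G → ℤ := fun p => f p
  have hf : ∀ g h j : G, F (g * h, j) + F (g, h) = (φ g : ℤ) * F (h, j) + F (g, h * j) :=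
    (groupCohomology.mem_cocycles₂_iff (A := A) (f : G × G → ℤ)).1 f.2
  by_cases hex : ∃ g₀ : G, (φ g₀ : ℤ) = -1
  · obtain ⟨g₀, hg₀⟩ := hex
    refine ⟨fun g => (F (g, g₀) - F (g₀, g) : ℤ), fun g h => ?_⟩
    have e1 := hf g h g₀
    have e2 := hf g g₀ h
    have e3 := hf g₀ g h
    rw [mul_comm h g₀] at e1
    rw [mul_comm g g₀] at e2
    rw [hg₀] at e3
    show (φ g : ℤ) * (F (h, g₀) - F (g₀, h)) - (F (g * h, g₀) - F (g₀, g * h))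
      + (F (g, g₀) - F (g₀, g)) = F (g, h) + F (g, h)
    linear_combination -e1 + e2 - e3
  · have hone : ∀ g : G, (φ g : ℤ) = 1 := by
      intro g
      rcases Int.units_eq_one_or (φ g) with h | h
      · rw [h]; rfl
      · exact absurd (by rw [h]; rfl) (fun hc => hex ⟨g, hc⟩)
    have sym : ∀ g h : G, F (g, h) = F (h, g) := by
      intro g h
      have E1 := hf g g h
      have E2 := hf h g g
      have E3 := hf g h g
      have E4 := hf 1 1 h
      have E5 := hf h 1 1
      rw [mul_comm h g] at E2
      rw [mul_comm h g] at E3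
      simp only [hone, one_mul, mul_one, hsq] at E1 E2 E3 E4 E5
      have h2 : 2 * F (g, h) = 2 * F (h, g) := by linear_combination -E1 - E2 + E3 - E4 - E5
      omega
    refine ⟨fun g => (F (g, g) + F (1, 1) : ℤ), fun g h => ?_⟩
    have hA1 := hf g h h
    have hB := hf (g * h) h g
    have hC := hf g 1 1
    rw [mul_comm h g] at hB
    rw [mul_assoc, hsq h, mul_one] at hB
    simp only [hone, one_mul, mul_one, hsq] at hA1 hB hC
    show (φ g : ℤ) * (F (h, h) + F (1, 1)) - (F (g * h, g * h) + F (1, 1))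
      + (F (g, g) + F (1, 1)) = F (g, h) + F (g, h)
    rw [hone, one_mul]
    linarith [hA1, hB, hC, sym g h]
end
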